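/- arXiv:2411.00611 — 2 statements merged into one kernel-verified Lean document; each statement's English description precedes it below -/
import Mathlib

section
/- Let K be an n×n Hermitian matrix with 0 ⪯ K ⪯ I, and let Φ be a real diagonal n×n matrix with diagonal entries φ(1),…,φ(n) satisfying |φ(i)| ≤ ‖φ‖_∞. Then for every integer k ≥ 1, ‖√(I-K) Φ^k √K‖_HS ≤ k ‖φ‖_∞^{k-1} ‖√(I-K) Φ √K‖_HS, where ‖·‖_HS is the Hilbert–Schmidt (Frobenius) norm and √K, √(I-K) denote the positive semidefinite square roots. -/
open scoped ComplexOrder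

/-- Hilbert–Schmidt (Frobenius) norm of a complex matrix. -/
noncomputable def hsNorm {n : ℕ} (A : Matrix (Fin n) (Fin n) ℂ) : ℝ :=
  Real.sqrt (∑ i, ∑ j, ‖A i j‖ ^ 2)

/-- The positive semidefinite square root, as `Matrix.PosSemidef.sqrt` was defined in Mathlib
(December 2024), where it has since been removed. -/
noncomputable def Matrix.PosSemidef.sqrt {n : Type*} [Fintype n] [DecidableEq n] {𝕜 : Type*}
    [RCLike 𝕜] {A : Matrix n n 𝕜} (hA : A.PosSemidef) : Matrix n n 𝕜 :=
  (hA.1.eigenvectorUnitary : Matrix n n 𝕜) *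
    Matrix.diagonal ((↑) ∘ Real.sqrt ∘ hA.1.eigenvalues) *
    (star (hA.1.eigenvectorUnitary : Matrix n n 𝕜))

lemma Matrix.PosSemidef.posSemidef_sqrt {n : Type*} [Fintype n] [DecidableEq n] {𝕜 : Type*}
    [RCLike 𝕜] {A : Matrix n n 𝕜} (hA : A.PosSemidef) : hA.sqrt.PosSemidef := by
  have hD : (Matrix.diagonal (((↑) ∘ Real.sqrt ∘ hA.1.eigenvalues) : n → 𝕜)).PosSemidef := by
    rw [Matrix.posSemidef_diagonal_iff]
    intro i
    simp [Real.sqrt_nonneg]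
  have h := hD.conjTranspose_mul_mul_same (star (hA.1.eigenvectorUnitary : Matrix n n 𝕜))
  rwa [Matrix.star_eq_conjTranspose, Matrix.conjTranspose_conjTranspose] at h

lemma Matrix.PosSemidef.sqrt_mul_self {n : Type*} [Fintype n] [DecidableEq n] {𝕜 : Type*}
    [RCLike 𝕜] {A : Matrix n n 𝕜} (hA : A.PosSemidef) : hA.sqrt * hA.sqrt = A := by
  have hU : star (hA.1.eigenvectorUnitary : Matrix n n 𝕜) * (hA.1.eigenvectorUnitary : Matrix n n 𝕜)
      = 1 := Unitary.coe_star_mul_self _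
  conv_rhs => rw [hA.1.spectral_theorem, Unitary.conjStarAlgAut_apply]
  simp only [Matrix.PosSemidef.sqrt, Matrix.mul_assoc]
  rw [← Matrix.mul_assoc (star _) (hA.1.eigenvectorUnitary : Matrix n n 𝕜), hU, Matrix.one_mul,
    ← Matrix.mul_assoc (Matrix.diagonal _), Matrix.diagonal_mul_diagonal]
  congr 3
  funext i
  simp only [Function.comp_apply]
  rw [← RCLike.ofReal_mul, Real.mul_self_sqrt (hA.eigenvalues_nonneg i)]

section StmtAux
open Matrix

lemma pow_sub_pow_sq_le {M : ℝ} (hM : 0 ≤ M) {x y : ℝ} (hx : |x| ≤ M) (hy : |y| ≤ M)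
    (k : ℕ) : (x ^ k - y ^ k) ^ 2 ≤ ((k : ℝ) * M ^ (k - 1)) ^ 2 * (x - y) ^ 2 := by
  have habs : |x ^ k - y ^ k| ≤ (k : ℝ) * M ^ (k - 1) * |x - y| := by
    rw [← geom_sum₂_mul x y k, abs_mul]
    gcongr
    calc |∑ i ∈ Finset.range k, x ^ i * y ^ (k - 1 - i)|
        ≤ ∑ i ∈ Finset.range k, |x ^ i * y ^ (k - 1 - i)| := Finset.abs_sum_le_sum_abs _ _
      _ ≤ ∑ i ∈ Finset.range k, M ^ (k - 1) := by
          apply Finset.sum_le_sum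
          intro i hi
          rw [Finset.mem_range] at hi
          rw [abs_mul, abs_pow, abs_pow]
          calc |x| ^ i * |y| ^ (k - 1 - i) ≤ M ^ i * M ^ (k - 1 - i) := by
                gcongr
            _ = M ^ (k - 1) := by rw [← pow_add]; congr 1; omega
      _ = (k : ℝ) * M ^ (k - 1) := by
          rw [Finset.sum_const, Finset.card_range, nsmul_eq_mul]
  calc (x ^ k - y ^ k) ^ 2 = |x ^ k - y ^ k| ^ 2 := (sq_abs _).symm
    _ ≤ ((k : ℝ) * M ^ (k - 1) * |x - y|) ^ 2 := by
        exact pow_le_pow_left₀ (abs_nonneg _) habs 2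
    _ = ((k : ℝ) * M ^ (k - 1)) ^ 2 * (x - y) ^ 2 := by rw [mul_pow, sq_abs]

lemma psd_diag_re_nonneg {n : ℕ} {A : Matrix (Fin n) (Fin n) ℂ} (hA : A.PosSemidef)
    (a : Fin n) : 0 ≤ (A a a).re := by
  have h := hA.dotProduct_mulVec_nonneg (Pi.single a 1)
  have h2 : (Pi.single a 1 : Fin n → ℂ) ⬝ᵥ A *ᵥ Pi.single a 1 = A a a := by
    simp [dotProduct, Matrix.mulVec, Pi.single_apply]
  rw [show star (Pi.single a 1 : Fin n → ℂ) = Pi.single a 1 by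
    ext i; simp [Pi.single_apply, apply_ite]] at h
  rw [h2] at h
  exact (Complex.nonneg_iff.mp h).1

lemma trace_form {n : ℕ} (C : Matrix (Fin n) (Fin n) ℂ) :
    ∑ i, ∑ j, ‖C i j‖ ^ 2 = (Matrix.trace (Cᴴ * C)).re := by
  simp only [Matrix.trace, Matrix.diag, Matrix.mul_apply, Matrix.conjTranspose_apply,
    Complex.re_sum]
  rw [Finset.sum_comm]
  congr 1; ext i; congr 1; ext j
  rw [show star (C j i) * C j i = ((Complex.normSq (C j i) : ℝ) : ℂ) from
    Complex.normSq_eq_conj_mul_self.symm]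
  simp [Complex.normSq_eq_norm_sq, ← Complex.ofReal_pow]

lemma key_calc {n : ℕ} (A B : Matrix (Fin n) (Fin n) ℂ) (hA : A.IsHermitian)
    (hB : B.IsHermitian) (ψ : Fin n → ℝ)
    (htf : ∑ i, ∑ j, ‖(A * Matrix.diagonal (fun a => (ψ a : ℂ)) * B) i j‖ ^ 2
      = (Matrix.trace ((A * Matrix.diagonal (fun a => (ψ a : ℂ)) * B)ᴴ *
          (A * Matrix.diagonal (fun a => (ψ a : ℂ)) * B))).re) :
    ∑ i, ∑ j, ‖(A * Matrix.diagonal (fun a => (ψ a : ℂ)) * B) i j‖ ^ 2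
    = ∑ a, ∑ b, ψ a * ψ b * (((A * A) a b) * ((B * B) b a)).re := by
  rw [htf]
  set D := Matrix.diagonal (fun a => (ψ a : ℂ)) with hDdef
  have hD : Dᴴ = D := by
    rw [hDdef, Matrix.diagonal_conjTranspose]
    ext i j
    by_cases h : i = j <;> simp [Matrix.diagonal_apply, apply_ite, Complex.conj_ofReal, h]
  have h1 : (A * D * B)ᴴ = B * D * A := by
    rw [Matrix.conjTranspose_mul, Matrix.conjTranspose_mul, hD, hA.eq, hB.eq, Matrix.mul_assoc]
  rw [h1]
  have h2 : Matrix.trace (B * D * A * (A * D * B))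
      = Matrix.trace (D * (A * A) * D * (B * B)) := by
    rw [show B * D * A * (A * D * B) = B * (D * (A * A) * D * B) by
      simp only [Matrix.mul_assoc]]
    rw [Matrix.trace_mul_comm]
    simp only [Matrix.mul_assoc]
  rw [h2, Matrix.trace]
  have h3 : ∀ a, (D * (A * A) * D * (B * B)).diag a
      = ∑ b, (ψ a : ℂ) * (A * A) a b * (ψ b : ℂ) * (B * B) b a := by
    intro a
    rw [Matrix.diag_apply, Matrix.mul_apply]
    refine Finset.sum_congr rfl fun b _ => ?_
    rw [hDdef, Matrix.mul_diagonal, Matrix.diagonal_mul]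
  rw [Finset.sum_congr rfl fun a _ => h3 a]
  simp only [Complex.re_sum]
  refine Finset.sum_congr rfl fun a _ => Finset.sum_congr rfl fun b _ => ?_
  have hterm : (ψ a : ℂ) * (A * A) a b * (ψ b : ℂ) * (B * B) b a
      = ((ψ a * ψ b : ℝ) : ℂ) * ((A * A) a b * (B * B) b a) := by push_cast; ring
  rw [hterm, Complex.re_ofReal_mul]

lemma real_ineq {n : ℕ} (d : Fin n → ℝ) (R : Fin n → Fin n → ℝ)
    (hRs : ∀ a b, R a b = R b a) (hRn : ∀ a b, 0 ≤ R a b)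
    (hE : ∀ a, 0 ≤ d a - ∑ b, R a b)
    (ψ χ : Fin n → ℝ) (c : ℝ)
    (hc1 : ∀ a, ψ a ^ 2 ≤ c ^ 2 * χ a ^ 2)
    (hc2 : ∀ a b, (ψ a - ψ b) ^ 2 ≤ c ^ 2 * (χ a - χ b) ^ 2) :
    ∑ a, ∑ b, ψ a * ψ b * ((if a = b then d a else 0) - R a b)
      ≤ c ^ 2 * ∑ a, ∑ b, χ a * χ b * ((if a = b then d a else 0) - R a b) := by
  have swap : ∀ θ : Fin n → ℝ, ∑ a, ∑ b, θ b ^ 2 * R a b = ∑ a, ∑ b, θ a ^ 2 * R a b := by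
    intro θ
    rw [Finset.sum_comm]
    exact Finset.sum_congr rfl fun a _ => Finset.sum_congr rfl fun b _ => by rw [hRs]
  have hsplit : ∀ θ : Fin n → ℝ, ∑ a, ∑ b, θ a * θ b * ((if a = b then d a else 0) - R a b)
      = ∑ a, θ a ^ 2 * d a - ∑ a, ∑ b, θ a * θ b * R a b := by
    intro θ
    rw [← Finset.sum_sub_distrib]
    refine Finset.sum_congr rfl fun a _ => ?_
    have h1 : ∀ b, θ a * θ b * ((if a = b then d a else 0) - R a b)
        = (if a = b then θ a * θ b * d a else 0) - θ a * θ b * R a b := by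
      intro b; split <;> ring
    simp_rw [h1, Finset.sum_sub_distrib, Finset.sum_ite_eq, Finset.mem_univ, if_true]
    ring
  have hcross : ∀ θ : Fin n → ℝ, ∑ a, ∑ b, (θ a - θ b) ^ 2 * R a b
      = 2 * ∑ a, ∑ b, θ a ^ 2 * R a b - 2 * ∑ a, ∑ b, θ a * θ b * R a b := by
    intro θ
    have h1 : ∀ a b : Fin n, (θ a - θ b) ^ 2 * R a b
        = θ a ^ 2 * R a b + θ b ^ 2 * R a b - 2 * (θ a * θ b * R a b) := by intros; ring
    simp_rw [h1, Finset.sum_sub_distrib, Finset.sum_add_distrib, ← Finset.mul_sum]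
    rw [swap θ]
    simp_rw [Finset.mul_sum]
    have h2 : ∑ x : Fin n, ∑ y : Fin n, 2 * (θ x ^ 2 * R x y)
        = (∑ x : Fin n, ∑ y : Fin n, θ x ^ 2 * R x y) * 2 := by
      rw [Finset.sum_mul]
      exact Finset.sum_congr rfl fun x _ => by
        rw [Finset.sum_mul]; exact Finset.sum_congr rfl fun y _ => by ring
    rw [h2]
    ring
  have hEsum : ∀ θ : Fin n → ℝ, ∑ a, θ a ^ 2 * (d a - ∑ b, R a b)
      = ∑ a, θ a ^ 2 * d a - ∑ a, ∑ b, θ a ^ 2 * R a b := by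
    intro θ
    simp_rw [mul_sub, Finset.sum_sub_distrib, Finset.mul_sum]
  have hiden : ∀ θ : Fin n → ℝ,
      2 * ∑ a, ∑ b, θ a * θ b * ((if a = b then d a else 0) - R a b)
      = 2 * ∑ a, θ a ^ 2 * (d a - ∑ b, R a b) + ∑ a, ∑ b, (θ a - θ b) ^ 2 * R a b := by
    intro θ
    rw [hsplit θ, hcross θ, hEsum θ]
    ring
  have hb1 : ∑ a, ψ a ^ 2 * (d a - ∑ b, R a b)
      ≤ c ^ 2 * ∑ a, χ a ^ 2 * (d a - ∑ b, R a b) := by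
    rw [Finset.mul_sum]
    refine Finset.sum_le_sum fun a _ => ?_
    rw [← mul_assoc]
    exact mul_le_mul_of_nonneg_right (hc1 a) (hE a)
  have hb2 : ∑ a, ∑ b, (ψ a - ψ b) ^ 2 * R a b
      ≤ c ^ 2 * ∑ a, ∑ b, (χ a - χ b) ^ 2 * R a b := by
    simp_rw [Finset.mul_sum]
    refine Finset.sum_le_sum fun a _ => Finset.sum_le_sum fun b _ => ?_
    rw [← mul_assoc]
    exact mul_le_mul_of_nonneg_right (hc2 a b) (hRn a b)
  have h1 := hiden ψ
  have h2 := hiden χ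
  nlinarith [hb1, hb2]

end StmtAux

set_option maxHeartbeats 1000000 in
theorem stmt3 {n : ℕ} (K : Matrix (Fin n) (Fin n) ℂ) (hK : K.PosSemidef)
    (hIK : (1 - K).PosSemidef) (φ : Fin n → ℝ) (M : ℝ) (hM : 0 ≤ M)
    (hφ : ∀ i, |φ i| ≤ M) (k : ℕ) (hk : 1 ≤ k) :
    hsNorm (hIK.sqrt * (Matrix.diagonal fun i => (φ i : ℂ)) ^ k * hK.sqrt) ≤
      (k : ℝ) * M ^ (k - 1) *
        hsNorm (hIK.sqrt * (Matrix.diagonal fun i => (φ i : ℂ)) * hK.sqrt) := by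
  set c : ℝ := (k : ℝ) * M ^ (k - 1) with hcdef
  have hc : 0 ≤ c := by positivity
  have hA : hIK.sqrt.IsHermitian := hIK.posSemidef_sqrt.1
  have hB : hK.sqrt.IsHermitian := hK.posSemidef_sqrt.1
  have hAA : hIK.sqrt * hIK.sqrt = 1 - K := hIK.sqrt_mul_self
  have hBB : hK.sqrt * hK.sqrt = K := hK.sqrt_mul_self
  have hherm : ∀ a b, K b a = (starRingEnd ℂ) (K a b) := by
    intro a b
    have h := congrFun (congrFun hK.1 b) a
    rw [← h, Matrix.conjTranspose_apply]
    rfl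
  set ψ : Fin n → ℝ := fun a => φ a ^ k with hψdef
  have hpow : (Matrix.diagonal fun i => (φ i : ℂ)) ^ k
      = Matrix.diagonal (fun i => (ψ i : ℂ)) := by
    rw [Matrix.diagonal_pow]
    ext i j
    by_cases h : i = j <;>
      simp [Matrix.diagonal_apply, h, hψdef, Pi.pow_apply, Complex.ofReal_pow]
  have hkey : ∀ θ : Fin n → ℝ,
      ∑ i, ∑ j, ‖(hIK.sqrt * Matrix.diagonal (fun a => (θ a : ℂ)) * hK.sqrt) i j‖ ^ 2
      = ∑ a, ∑ b, θ a * θ b *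
          ((if a = b then (K a a).re else 0) - Complex.normSq (K a b)) := by
    intro θ
    rw [key_calc _ _ hA hB θ (trace_form _), hAA, hBB]
    refine Finset.sum_congr rfl fun a _ => Finset.sum_congr rfl fun b _ => ?_
    congr 1
    rw [Matrix.sub_apply, Matrix.one_apply, sub_mul, hherm a b, Complex.mul_conj]
    by_cases h : a = b
    · subst h; simp
    · simp [h]
  have hKK : (K - K * K).PosSemidef := by
    have h := hIK.conjTranspose_mul_mul_same hK.sqrt
    rw [hB.eq] at h
    have heq : hK.sqrt * (1 - K) * hK.sqrt = K - K * K := by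
      rw [Matrix.mul_sub, Matrix.mul_one, Matrix.sub_mul, hBB]
      rw [sub_right_inj]
      calc hK.sqrt * K * hK.sqrt
          = hK.sqrt * (hK.sqrt * hK.sqrt) * hK.sqrt := by rw [hBB]
        _ = hK.sqrt * hK.sqrt * (hK.sqrt * hK.sqrt) := by simp only [Matrix.mul_assoc]
        _ = K * K := by rw [hBB]
    rwa [heq] at h
  have hE : ∀ a, 0 ≤ (K a a).re - ∑ b, Complex.normSq (K a b) := by
    intro a
    have h0 := psd_diag_re_nonneg hKK a
    have h1 : ((K - K * K) a a).re = (K a a).re - ∑ b, Complex.normSq (K a b) := by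
      rw [Matrix.sub_apply, Complex.sub_re]
      congr 1
      rw [Matrix.mul_apply, Complex.re_sum]
      refine Finset.sum_congr rfl fun b _ => ?_
      rw [hherm a b, Complex.mul_conj]
      simp
    linarith
  have hRs : ∀ a b : Fin n, Complex.normSq (K a b) = Complex.normSq (K b a) := by
    intro a b
    rw [hherm a b, Complex.normSq_conj]
  have hc1 : ∀ a, ψ a ^ 2 ≤ c ^ 2 * φ a ^ 2 := by
    intro a
    have h := pow_sub_pow_sq_le hM (hφ a) (by simpa using hM : |(0:ℝ)| ≤ M) k
    simpa [hψdef, zero_pow (by omega : k ≠ 0)] using h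
  have hc2 : ∀ a b, (ψ a - ψ b) ^ 2 ≤ c ^ 2 * (φ a - φ b) ^ 2 := fun a b =>
    pow_sub_pow_sq_le hM (hφ a) (hφ b) k
  have hineq := real_ineq (fun a => (K a a).re) (fun a b => Complex.normSq (K a b))
    hRs (fun a b => Complex.normSq_nonneg _) hE ψ φ c hc1 hc2
  have hT1 : 0 ≤ ∑ a, ∑ b, φ a * φ b *
      ((if a = b then (K a a).re else 0) - Complex.normSq (K a b)) := by
    rw [← hkey φ]
    positivity
  simp only [hsNorm]
  rw [hpow, hkey ψ, hkey φ]
  calc Real.sqrt (∑ a, ∑ b, ψ a * ψ b *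
        ((if a = b then (K a a).re else 0) - Complex.normSq (K a b)))
      ≤ Real.sqrt (c ^ 2 * ∑ a, ∑ b, φ a * φ b *
        ((if a = b then (K a a).re else 0) - Complex.normSq (K a b))) :=
        Real.sqrt_le_sqrt hineq
    _ = c * Real.sqrt (∑ a, ∑ b, φ a * φ b *
        ((if a = b then (K a a).re else 0) - Complex.normSq (K a b))) := by
        rw [Real.sqrt_mul (sq_nonneg c), Real.sqrt_sq hc]
end

section
/- Let K be an n×n Hermitian matrix with 0 ⪯ K ⪯ I, Φ = Diag(φ) real diagonal with ‖φ‖_∞ = max_i |φ(i)|, and set C₂ := Tr[Φ(I-K)ΦK]. Then for any integers k₁, …, k_q ≥ 1, with k = k₁+…+k_q, one has |Tr[Φ^{k₁}K ⋯ Φ^{k_{q-2}}K Φ^{k_{q-1}+k_q}K] - Tr[Φ^{k₁}K ⋯ Φ^{k_{q-2}}K Φ^{k_{q-1}}K Φ^{k_q}K]| ≤ k_{q-1} k_q ‖φ‖_∞^{k-2} C₂. -/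
open scoped ComplexOrder Matrix

namespace Stmt19Aux

variable {m : Type*} [Fintype m] [DecidableEq m]

noncomputable def emb {m : Type*} [Fintype m] (A : Matrix m m ℂ) : EuclideanSpace ℂ (m × m) :=
  WithLp.toLp 2 (fun p : m × m => A p.1 p.2)

lemma emb_add {m : Type*} [Fintype m] (A B : Matrix m m ℂ) : emb (A + B) = emb A + emb B := rfl

lemma inner_emb (A B : Matrix m m ℂ) :
    (inner ℂ (emb A) (emb B) : ℂ) = (Aᴴ * B).trace := by
  simp only [PiLp.inner_apply, emb, RCLike.inner_apply, Matrix.trace, Matrix.diag,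
    Matrix.mul_apply, Matrix.conjTranspose_apply, Fintype.sum_prod_type]
  rw [Finset.sum_comm]
  exact Finset.sum_congr rfl fun _ _ => Finset.sum_congr rfl fun _ _ => mul_comm _ _

lemma norm_emb_sq (A : Matrix m m ℂ) : ‖emb A‖ ^ 2 = (Aᴴ * A).trace.re := by
  rw [← inner_self_eq_norm_sq (𝕜 := ℂ), inner_emb, RCLike.re_to_complex]

lemma norm_emb_conjTranspose (A : Matrix m m ℂ) : ‖emb Aᴴ‖ = ‖emb A‖ := by
  have h : ‖emb Aᴴ‖ ^ 2 = ‖emb A‖ ^ 2 := by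
    rw [norm_emb_sq, norm_emb_sq, Matrix.conjTranspose_conjTranspose,
      Matrix.trace_mul_comm]
  calc ‖emb Aᴴ‖ = Real.sqrt (‖emb Aᴴ‖ ^ 2) := (Real.sqrt_sq (norm_nonneg _)).symm
    _ = Real.sqrt (‖emb A‖ ^ 2) := by rw [h]
    _ = ‖emb A‖ := Real.sqrt_sq (norm_nonneg _)

/-- `X` has operator norm at most `c`. -/
def opb (X : Matrix m m ℂ) (c : ℝ) : Prop :=
  0 ≤ c ∧ (((c ^ 2 : ℝ) : ℂ) • 1 - Xᴴ * X).PosSemidef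

lemma psd_smul {A : Matrix m m ℂ} (hA : A.PosSemidef) {r : ℝ} (hr : 0 ≤ r) :
    ((r : ℂ) • A).PosSemidef := by
  refine Matrix.PosSemidef.of_dotProduct_mulVec_nonneg ?_ fun x => ?_
  · have := hA.1
    unfold Matrix.IsHermitian at *
    rw [Matrix.conjTranspose_smul, this]
    congr 1
    simp
  · have h1 : dotProduct (star x) (((r : ℂ) • A) *ᵥ x)
        = (r : ℂ) * dotProduct (star x) (A *ᵥ x) := by
      rw [Matrix.smul_mulVec, dotProduct_smul]
      simp
    rw [h1]
    exact mul_nonneg (by exact_mod_cast Complex.zero_le_real.mpr hr) (hA.dotProduct_mulVec_nonneg x)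

lemma opb_one : opb (1 : Matrix m m ℂ) 1 := by
  refine ⟨zero_le_one, ?_⟩
  simpa using Matrix.PosSemidef.zero (n := m) (R := ℂ)

lemma opb_mul {X Y : Matrix m m ℂ} {c d : ℝ} (hX : opb X c) (hY : opb Y d) :
    opb (X * Y) (c * d) := by
  refine ⟨mul_nonneg hX.1 hY.1, ?_⟩
  have key : (((c * d) ^ 2 : ℝ) : ℂ) • 1 - (X * Y)ᴴ * (X * Y)
      = ((c ^ 2 : ℝ) : ℂ) • (((d ^ 2 : ℝ) : ℂ) • (1 : Matrix m m ℂ) - Yᴴ * Y)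
        + Yᴴ * (((c ^ 2 : ℝ) : ℂ) • 1 - Xᴴ * X) * Y := by
    rw [Matrix.conjTranspose_mul]
    push_cast
    simp only [smul_sub, Matrix.mul_sub, Matrix.sub_mul, mul_smul_comm, smul_mul_assoc,
      Matrix.mul_one, smul_smul, Matrix.mul_assoc, mul_pow]
    abel
  rw [key]
  exact ((psd_smul hY.2 (sq_nonneg c)).add (hX.2.conjTranspose_mul_mul_same Y))

lemma opb_pow {X : Matrix m m ℂ} {c : ℝ} (hX : opb X c) (e : ℕ) :
    opb (X ^ e) (c ^ e) := by
  induction e with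
  | zero => simpa using opb_one
  | succ e ih => rw [pow_succ, pow_succ]; exact opb_mul ih hX


open scoped MatrixOrder in
lemma trace_conj_nonneg {C : Matrix m m ℂ} (hC : C.PosSemidef) (A : Matrix m m ℂ) :
    0 ≤ ((Aᴴ * C * A).trace).re := by
  have h : Aᴴ * C * A = (CFC.sqrt C * A)ᴴ * (CFC.sqrt C * A) := by
    rw [Matrix.conjTranspose_mul, (Matrix.nonneg_iff_posSemidef.mp (CFC.sqrt_nonneg C)).1]
    rw [Matrix.mul_assoc, Matrix.mul_assoc, ← Matrix.mul_assoc (CFC.sqrt C), CFC.sqrt_mul_sqrt_self C hC.nonneg]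
  rw [h, ← norm_emb_sq]
  exact sq_nonneg _

lemma emb_mul_le {X A : Matrix m m ℂ} {c : ℝ} (hX : opb X c) :
    ‖emb (X * A)‖ ≤ c * ‖emb A‖ := by
  have expand : Aᴴ * (((c ^ 2 : ℝ) : ℂ) • 1 - Xᴴ * X) * A
      = ((c ^ 2 : ℝ) : ℂ) • (Aᴴ * A) - (X * A)ᴴ * (X * A) := by
    rw [Matrix.conjTranspose_mul]
    simp only [Matrix.mul_sub, Matrix.sub_mul, mul_smul_comm, smul_mul_assoc,
      Matrix.mul_one, Matrix.mul_assoc]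
  have key := trace_conj_nonneg hX.2 A
  rw [expand, Matrix.trace_sub, Matrix.trace_smul] at key
  have h2 : ‖emb (X * A)‖ ^ 2 ≤ (c * ‖emb A‖) ^ 2 := by
    rw [norm_emb_sq, mul_pow, norm_emb_sq]
    have : (((c ^ 2 : ℝ) : ℂ) • (Aᴴ * A).trace).re = c ^ 2 * (Aᴴ * A).trace.re := by
      simp [smul_eq_mul, Complex.mul_re, ← Complex.ofReal_pow]
    rw [Complex.sub_re, this] at key
    linarith
  have h0 : 0 ≤ c * ‖emb A‖ := mul_nonneg hX.1 (norm_nonneg _)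
  calc ‖emb (X * A)‖ = Real.sqrt (‖emb (X * A)‖ ^ 2) := (Real.sqrt_sq (norm_nonneg _)).symm
    _ ≤ Real.sqrt ((c * ‖emb A‖) ^ 2) := Real.sqrt_le_sqrt h2
    _ = c * ‖emb A‖ := Real.sqrt_sq h0

lemma emb_mul_right_le {A Y : Matrix m m ℂ} {c : ℝ} (hY : opb Yᴴ c) :
    ‖emb (A * Y)‖ ≤ c * ‖emb A‖ := by
  have h : A * Y = (Yᴴ * Aᴴ)ᴴ := by
    rw [Matrix.conjTranspose_mul, Matrix.conjTranspose_conjTranspose,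
      Matrix.conjTranspose_conjTranspose]
  rw [h, norm_emb_conjTranspose]
  calc ‖emb (Yᴴ * Aᴴ)‖ ≤ c * ‖emb Aᴴ‖ := emb_mul_le hY
    _ = c * ‖emb A‖ := by rw [norm_emb_conjTranspose]

lemma tele {S T Φm : Matrix m m ℂ} {M : ℝ}
    (hSh : Sᴴ = S) (hTh : Tᴴ = T) (hΦh : Φmᴴ = Φm)
    (hone : S * S + T * T = 1)
    (hS : opb S 1) (hT : opb T 1) (hΦ : opb Φm M) :
    ∀ j : ℕ, 1 ≤ j →
      ‖emb (T * Φm ^ j * S)‖ ≤ (j : ℝ) * M ^ (j - 1) * ‖emb (T * Φm * S)‖ := by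
  have hM : 0 ≤ M := hΦ.1
  have oSΦS : opb (S * Φm * S) M := by
    have := opb_mul (opb_mul hS hΦ) hS
    simpa using this
  intro j hj
  induction j with
  | zero => omega
  | succ j ih =>
    rcases Nat.lt_or_ge j 1 with h1 | h1
    · interval_cases j
      simp
    · have ihj := ih h1
      have oTΦT : opb (T * Φm ^ j * T) (M ^ j) := by
        have := opb_mul (opb_mul hT (opb_pow hΦ j)) hT
        simpa using this
      have split : T * Φm ^ (j + 1) * S
          = (T * Φm ^ j * S) * (S * Φm * S) + (T * Φm ^ j * T) * (T * Φm * S) := by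
        have h2 : Φm ^ (j + 1) = Φm ^ j * ((S * S + T * T) * Φm) := by
          rw [hone, one_mul, pow_succ]
        rw [h2]
        noncomm_ring
      have hΦSh : (S * Φm * S)ᴴ = S * Φm * S := by
        simp [Matrix.conjTranspose_mul, hSh, hΦh, Matrix.mul_assoc]
      have b1 : ‖emb ((T * Φm ^ j * S) * (S * Φm * S))‖ ≤ M * ‖emb (T * Φm ^ j * S)‖ :=
        emb_mul_right_le (by rw [hΦSh]; exact oSΦS)
      have b2 : ‖emb ((T * Φm ^ j * T) * (T * Φm * S))‖ ≤ M ^ j * ‖emb (T * Φm * S)‖ :=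
        emb_mul_le oTΦT
      have hpow : M * M ^ (j - 1) = M ^ j := by
        rw [← pow_succ']
        congr 1
        omega
      have hv : 0 ≤ ‖emb (T * Φm * S)‖ := norm_nonneg _
      calc ‖emb (T * Φm ^ (j + 1) * S)‖
          = ‖emb ((T * Φm ^ j * S) * (S * Φm * S)) + emb ((T * Φm ^ j * T) * (T * Φm * S))‖ := by
            rw [split, emb_add]
        _ ≤ ‖emb ((T * Φm ^ j * S) * (S * Φm * S))‖
            + ‖emb ((T * Φm ^ j * T) * (T * Φm * S))‖ := norm_add_le _ _
        _ ≤ M * ‖emb (T * Φm ^ j * S)‖ + M ^ j * ‖emb (T * Φm * S)‖ := by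
            exact add_le_add b1 b2
        _ ≤ M * ((j : ℝ) * M ^ (j - 1) * ‖emb (T * Φm * S)‖)
            + M ^ j * ‖emb (T * Φm * S)‖ := by
            have := mul_le_mul_of_nonneg_left ihj hM
            linarith
        _ = ((j : ℝ) + 1) * M ^ j * ‖emb (T * Φm * S)‖ := by
            rw [← hpow]; ring
        _ = ((j + 1 : ℕ) : ℝ) * M ^ (j + 1 - 1) * ‖emb (T * Φm * S)‖ := by
            push_cast
            norm_num

lemma listQ {S Φm Km : Matrix m m ℂ} {M : ℝ}
    (hSS : S * S = Km) (hS : opb S 1) (hΦ : opb Φm M) (l : List ℕ) :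
    ∃ Q : Matrix m m ℂ, opb Q (M ^ l.sum) ∧
      S * (l.map fun e => Φm ^ e * Km).prod = Q * S := by
  induction l with
  | nil => exact ⟨1, by simpa using opb_one, by simp⟩
  | cons e l ih =>
    obtain ⟨Q, hQ, hprod⟩ := ih
    refine ⟨(S * Φm ^ e * S) * Q, ?_, ?_⟩
    · have := opb_mul (opb_mul (opb_mul hS (opb_pow hΦ e)) hS) hQ
      simpa [pow_add] using this
    · simp only [List.map_cons, List.prod_cons]
      calc S * (Φm ^ e * Km * (l.map fun e => Φm ^ e * Km).prod)
          = (S * Φm ^ e * S) * (S * (l.map fun e => Φm ^ e * Km).prod) := by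
            rw [← hSS]; noncomm_ring
        _ = (S * Φm ^ e * S) * (Q * S) := by rw [hprod]
        _ = ((S * Φm ^ e * S) * Q) * S := (Matrix.mul_assoc _ _ _).symm

end Stmt19Aux

open scoped MatrixOrder in
open Stmt19Aux in
theorem stmt19 {n : ℕ} (K : Matrix (Fin n) (Fin n) ℂ) (hK : K.PosSemidef)
    (hIK : (1 - K).PosSemidef) (φ : Fin n → ℝ) (M : ℝ) (hM : 0 ≤ M)
    (hφ : ∀ i, |φ i| ≤ M)
    (l : List ℕ) (hl : ∀ e ∈ l, 1 ≤ e) (a b : ℕ) (ha : 1 ≤ a) (hb : 1 ≤ b) :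
    ‖(((l.map fun e => (Matrix.diagonal fun i => (φ i : ℂ)) ^ e * K).prod) *
          (Matrix.diagonal fun i => (φ i : ℂ)) ^ (a + b) * K).trace -
        (((l.map fun e => (Matrix.diagonal fun i => (φ i : ℂ)) ^ e * K).prod) *
          (Matrix.diagonal fun i => (φ i : ℂ)) ^ a * K *
          (Matrix.diagonal fun i => (φ i : ℂ)) ^ b * K).trace‖ ≤
      (a : ℝ) * b * M ^ (l.sum + a + b - 2) *
        ((Matrix.diagonal fun i => (φ i : ℂ)) * (1 - K) *
          (Matrix.diagonal fun i => (φ i : ℂ)) * K).trace.re := by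
  obtain ⟨S, hSS, hSh⟩ : ∃ S : Matrix (Fin n) (Fin n) ℂ, S * S = K ∧ Sᴴ = S :=
    ⟨CFC.sqrt K, CFC.sqrt_mul_sqrt_self K hK.nonneg, (Matrix.nonneg_iff_posSemidef.mp (CFC.sqrt_nonneg K)).1⟩
  obtain ⟨T, hTT, hTh⟩ : ∃ T : Matrix (Fin n) (Fin n) ℂ, T * T = 1 - K ∧ Tᴴ = T :=
    ⟨CFC.sqrt (1 - K), CFC.sqrt_mul_sqrt_self (1 - K) hIK.nonneg, (Matrix.nonneg_iff_posSemidef.mp (CFC.sqrt_nonneg (1 - K))).1⟩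
  set Φm : Matrix (Fin n) (Fin n) ℂ := Matrix.diagonal fun i => (φ i : ℂ) with hΦm
  have hone : S * S + T * T = 1 := by rw [hSS, hTT]; abel
  have hΦh : Φmᴴ = Φm := by
    have hstar : (star fun i : Fin n => (φ i : ℂ)) = fun i : Fin n => (φ i : ℂ) := by
      funext i
      exact Complex.conj_ofReal _
    rw [hΦm, Matrix.diagonal_conjTranspose, hstar]
  have opbS : opb S 1 := by
    refine ⟨zero_le_one, ?_⟩
    have h : (((1 : ℝ) ^ 2 : ℝ) : ℂ) • (1 : Matrix (Fin n) (Fin n) ℂ) - Sᴴ * S = 1 - K := by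
      rw [hSh, hSS]; norm_num
    rw [h]; exact hIK
  have opbT : opb T 1 := by
    refine ⟨zero_le_one, ?_⟩
    have h : (((1 : ℝ) ^ 2 : ℝ) : ℂ) • (1 : Matrix (Fin n) (Fin n) ℂ) - Tᴴ * T = K := by
      rw [hTh, hTT]; norm_num
    rw [h]; exact hK
  have opbΦ : opb Φm M := by
    refine ⟨hM, ?_⟩
    have h : ((M ^ 2 : ℝ) : ℂ) • (1 : Matrix (Fin n) (Fin n) ℂ) - Φmᴴ * Φm
        = Matrix.diagonal fun i => ((M ^ 2 - φ i ^ 2 : ℝ) : ℂ) := by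
      rw [hΦh, hΦm, Matrix.smul_one_eq_diagonal, Matrix.diagonal_mul_diagonal,
        Matrix.diagonal_sub]
      congr 1
      funext i
      push_cast
      ring
    rw [h]
    refine Matrix.posSemidef_diagonal_iff.mpr fun i => ?_
    refine Complex.zero_le_real.mpr ?_
    have h2 : φ i ^ 2 ≤ M ^ 2 := by
      rw [← sq_abs]
      exact pow_le_pow_left₀ (abs_nonneg _) (hφ i) 2
    linarith
  obtain ⟨Q, hQ, hQS⟩ := listQ hSS opbS opbΦ l
  set P : Matrix (Fin n) (Fin n) ℂ := (l.map fun e => Φm ^ e * K).prod with hP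
  set v : ℝ := ‖emb (T * Φm * S)‖ with hv
  have hvnn : 0 ≤ v := norm_nonneg _
  -- the trace difference
  have hdiff : P * Φm ^ (a + b) * K - P * Φm ^ a * K * Φm ^ b * K
      = P * Φm ^ a * (1 - K) * Φm ^ b * K := by
    rw [pow_add]
    noncomm_ring
  have step : (P * Φm ^ (a + b) * K).trace - (P * Φm ^ a * K * Φm ^ b * K).trace
      = (((Q * S * Φm ^ a * T)ᴴ)ᴴ * (T * Φm ^ b * S)).trace := by
    rw [← Matrix.trace_sub, hdiff, Matrix.conjTranspose_conjTranspose]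
    have h1 : P * Φm ^ a * (1 - K) * Φm ^ b * K
        = (P * Φm ^ a * T) * (T * Φm ^ b * S) * S := by
      rw [← hTT, ← hSS]
      noncomm_ring
    have h2 : S * (P * Φm ^ a * T) = Q * S * Φm ^ a * T := by
      calc S * (P * Φm ^ a * T) = (S * P) * Φm ^ a * T := by noncomm_ring
        _ = (Q * S) * Φm ^ a * T := by rw [hQS]
    rw [h1, Matrix.trace_mul_cycle, h2]
  rw [step, ← inner_emb]
  -- bounds
  have hYb : ‖emb (T * Φm ^ b * S)‖ ≤ (b : ℝ) * M ^ (b - 1) * v :=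
    tele hSh hTh hΦh hone opbS opbT opbΦ b hb
  have hXb : ‖emb ((Q * S * Φm ^ a * T)ᴴ)‖ ≤ M ^ l.sum * ((a : ℝ) * M ^ (a - 1) * v) := by
    rw [norm_emb_conjTranspose]
    have h1 : Q * S * Φm ^ a * T = Q * (S * Φm ^ a * T) := by
      rw [Matrix.mul_assoc, Matrix.mul_assoc, Matrix.mul_assoc]
    have h2 : ‖emb (Q * (S * Φm ^ a * T))‖ ≤ M ^ l.sum * ‖emb (S * Φm ^ a * T)‖ :=
      emb_mul_le hQ
    have h3 : S * Φm ^ a * T = (T * Φm ^ a * S)ᴴ := by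
      rw [Matrix.conjTranspose_mul, Matrix.conjTranspose_mul, hSh, hTh,
        Matrix.conjTranspose_pow, hΦh, Matrix.mul_assoc]
    have h4 : ‖emb (S * Φm ^ a * T)‖ ≤ (a : ℝ) * M ^ (a - 1) * v := by
      rw [h3, norm_emb_conjTranspose]
      exact tele hSh hTh hΦh hone opbS opbT opbΦ a ha
    rw [h1]
    calc ‖emb (Q * (S * Φm ^ a * T))‖ ≤ M ^ l.sum * ‖emb (S * Φm ^ a * T)‖ := h2
      _ ≤ M ^ l.sum * ((a : ℝ) * M ^ (a - 1) * v) :=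
        mul_le_mul_of_nonneg_left h4 (pow_nonneg hM _)
  -- the variance
  have hvsq : v ^ 2 = (Φm * (1 - K) * Φm * K).trace.re := by
    have h1 : (T * Φm * S)ᴴ * (T * Φm * S) = S * (Φm * (1 - K) * Φm) * S := by
      rw [Matrix.conjTranspose_mul, Matrix.conjTranspose_mul, hSh, hTh, hΦh, ← hTT]
      noncomm_ring
    have h2 : (S * (Φm * (1 - K) * Φm) * S).trace = (Φm * (1 - K) * Φm * K).trace := by
      rw [Matrix.trace_mul_cycle S (Φm * (1 - K) * Φm) S, hSS,
        Matrix.trace_mul_comm K (Φm * (1 - K) * Φm)]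
    rw [hv, norm_emb_sq, h1, h2]
  -- put it together
  have main : ‖(inner ℂ (emb ((Q * S * Φm ^ a * T)ᴴ)) (emb (T * Φm ^ b * S)) : ℂ)‖
      ≤ (M ^ l.sum * ((a : ℝ) * M ^ (a - 1) * v)) * ((b : ℝ) * M ^ (b - 1) * v) := by
    calc ‖(inner ℂ (emb ((Q * S * Φm ^ a * T)ᴴ)) (emb (T * Φm ^ b * S)) : ℂ)‖
        ≤ ‖emb ((Q * S * Φm ^ a * T)ᴴ)‖ * ‖emb (T * Φm ^ b * S)‖ := norm_inner_le_norm _ _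
      _ ≤ (M ^ l.sum * ((a : ℝ) * M ^ (a - 1) * v)) * ((b : ℝ) * M ^ (b - 1) * v) := by
          refine mul_le_mul hXb hYb (norm_nonneg _) ?_
          positivity
  refine main.trans (le_of_eq ?_)
  rw [← hvsq]
  have hpow : M ^ l.sum * M ^ (a - 1) * M ^ (b - 1) = M ^ (l.sum + a + b - 2) := by
    rw [← pow_add, ← pow_add]
    congr 1
    omega
  rw [← hpow]
  ring
end
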